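/- Let m ∈ ℕ and let h̃ : ℝ^m → ℂ be a measurable function such that ω ↦ e^{‖ω‖²/2} h̃(ω) is integrable (hence h̃ itself is integrable). Define h(u) := (2π)^{-m} ∫ e^{i⟨ω,u⟩} h̃(ω) dω and g(u) := (2π)^{-m} ∫ e^{i⟨ω,u⟩} e^{‖ω‖²/2} h̃(ω) dω. Then for every u ∈ ℝ^m, with U of law N(u, I_m): E[g(U)] = h(u). That is, g = E_{-1}h is a genuine inverse of the Gaussian smoothing operator: E₁(E₁^{-1}h) = h. -/

import Mathlib

open MeasureTheory ProbabilityTheory Set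
open scoped NNReal

/-- The Gaussian measure `N(μ, σ² I_m)` on `ℝ^m` as a product of one-dimensional
Gaussian measures. -/
noncomputable def gaussianPi {m : ℕ} (μ : Fin m → ℝ) (v : ℝ≥0) :
    Measure (Fin m → ℝ) :=
  Measure.pi fun i => gaussianReal (μ i) v

/-- The inverse Fourier transform with the angular-frequency convention
`(F⁻¹ f̃)(u) = (2π)^{-m} ∫ e^{i⟨ω,u⟩} f̃(ω) dω`. -/
noncomputable def Finv {m : ℕ} (f : (Fin m → ℝ) → ℂ) (u : Fin m → ℝ) : ℂ :=
  (((2 * Real.pi) ^ m)⁻¹ : ℝ) •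
    ∫ ω : Fin m → ℝ, Complex.exp (Complex.I * ((∑ i, ω i * u i : ℝ) : ℂ)) * f ω

/-! Since Gaussian smoothing multiplies the Fourier transform by the characteristic function
`e^{-v‖ω‖²/2}` of `N(0, v I_m)`, smoothing `F⁻¹[e^{‖ω‖²/2} h̃]` with `N(u, I_m)` returns
`F⁻¹ h̃`. The only analytic input is Fubini, justified because the Fourier kernel has modulus one
and the Gaussian is a probability measure. -/

lemma MeasureTheory.Integrable.of_exp_smul {α E : Type*} [MeasurableSpace α]
    [NormedAddCommGroup E] [NormedSpace ℝ E] {μ : Measure α} {φ : α → ℝ} {f : α → E}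
    (hφ : Measurable φ) (hφ_nonneg : ∀ a, 0 ≤ φ a)
    (h : Integrable (fun a => Real.exp (φ a) • f a) μ) : Integrable f μ := by
  have hbound : ∀ a, ‖Real.exp (-φ a)‖ ≤ 1 := fun a => by
    rw [Real.norm_eq_abs, abs_of_pos (Real.exp_pos _), Real.exp_le_one_iff, neg_nonpos]
    exact hφ_nonneg a
  convert h.bdd_smul 1 hφ.neg.exp.aestronglyMeasurable (ae_of_all _ hbound) using 1
  ext a
  simp [smul_smul, ← Real.exp_add]

lemma norm_cexp_I_mul_ofReal (r : ℝ) : ‖Complex.exp (Complex.I * r)‖ = 1 := by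
  rw [mul_comm, Complex.norm_exp_ofReal_mul_I]

lemma integral_Finv {m : ℕ} (μ : Measure (Fin m → ℝ)) [IsFiniteMeasure μ]
    {f : (Fin m → ℝ) → ℂ} (hf : Integrable f) :
    ∫ x, Finv f x ∂μ = (((2 * Real.pi) ^ m)⁻¹ : ℝ) •
      ∫ ω, (∫ x, Complex.exp (Complex.I * ((∑ i, ω i * x i : ℝ) : ℂ)) ∂μ) * f ω := by
  set K : (Fin m → ℝ) → (Fin m → ℝ) → ℂ :=
    fun x ω => Complex.exp (Complex.I * ((∑ i, ω i * x i : ℝ) : ℂ))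
  have hK : Continuous (Function.uncurry K) := by fun_prop
  have hprod : Integrable (Function.uncurry fun x ω => K x ω * f ω) (μ.prod volume) := by
    refine (hf.comp_snd μ).mono (hK.aestronglyMeasurable.mul hf.1.comp_snd) (ae_of_all _ ?_)
    rintro ⟨x, ω⟩
    simp only [Function.uncurry_apply_pair, K, norm_mul, norm_cexp_I_mul_ofReal, one_mul, le_refl]
  simp only [Finv]
  rw [integral_smul, integral_integral_swap hprod]
  simp only [K, integral_mul_const]

lemma integral_cexp_gaussianPi {m : ℕ} (u : Fin m → ℝ) (v : ℝ≥0) (ω : Fin m → ℝ) :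
    ∫ x, Complex.exp (Complex.I * ((∑ i, ω i * x i : ℝ) : ℂ)) ∂(gaussianPi u v)
      = Complex.exp (Complex.I * ((∑ i, ω i * u i : ℝ) : ℂ)) *
          (Real.exp (-(v * ∑ i, ω i ^ 2) / 2) : ℂ) := by
  have hprod : ∀ x : Fin m → ℝ, Complex.exp (Complex.I * ((∑ i, ω i * x i : ℝ) : ℂ))
      = ∏ i, Complex.exp (ω i * x i * Complex.I) := fun x => by
    rw [← Complex.exp_sum, ← Finset.sum_mul, mul_comm]
    push_cast
    rfl
  simp_rw [hprod]
  rw [gaussianPi,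
    integral_fintype_prod_eq_prod (fun i (y : ℝ) => Complex.exp (ω i * y * Complex.I))]
  simp_rw [← charFun_apply_real, charFun_gaussianReal, ← Complex.exp_sum, Complex.ofReal_exp,
    ← Complex.exp_add]
  congr 1
  push_cast
  rw [Finset.sum_sub_distrib, Finset.mul_sum, ← Finset.sum_div]
  ring

theorem integral_Finv_gaussianPi {m : ℕ} (u : Fin m → ℝ) (v : ℝ≥0)
    {f : (Fin m → ℝ) → ℂ} (hf : Integrable f) :
    ∫ x, Finv f x ∂(gaussianPi u v)
      = Finv (fun ω => Real.exp (-(v * ∑ i, ω i ^ 2) / 2) • f ω) u := by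
  have : IsProbabilityMeasure (gaussianPi u v) := by unfold gaussianPi; infer_instance
  simp_rw [integral_Finv _ hf, integral_cexp_gaussianPi, Finv, Complex.real_smul, mul_assoc]

theorem stmt_15_general (m : ℕ) (ht : (Fin m → ℝ) → ℂ)
    (hint : Integrable (fun ω : Fin m → ℝ =>
      Real.exp ((∑ i, ω i ^ 2) / 2) • ht ω)) :
    Integrable ht ∧
    ∀ u : Fin m → ℝ,
      ∫ x, Finv (fun ω : Fin m → ℝ => Real.exp ((∑ i, ω i ^ 2) / 2) • ht ω) x
          ∂(gaussianPi u 1)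
        = Finv ht u := by
  refine ⟨hint.of_exp_smul (by fun_prop) fun ω => by positivity, fun u => ?_⟩
  rw [integral_Finv_gaussianPi u 1 hint]
  congr 1
  ext ω
  rw [smul_smul, ← Real.exp_add, NNReal.coe_one, one_mul, neg_div, neg_add_cancel, Real.exp_zero,
    one_smul]

/-- Deconvolution of Gaussian smoothing: if `e^{‖ω‖²/2} h̃(ω)` is integrable then
`h̃` is integrable, and with `h = F⁻¹ h̃` and `g = F⁻¹[e^{‖ω‖²/2} h̃]`, Gaussian
smoothing recovers `h`: `E[g(U)] = h(u)` for `U ~ N(u, I_m)`; i.e. `g = E₋₁h`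
satisfies `E₁(E₁⁻¹ h) = h`. -/
theorem stmt_15 (m : ℕ) (ht : (Fin m → ℝ) → ℂ) (hmeas : Measurable ht)
    (hint : Integrable (fun ω : Fin m → ℝ =>
      Real.exp ((∑ i, ω i ^ 2) / 2) • ht ω)) :
    Integrable ht ∧
    ∀ u : Fin m → ℝ,
      ∫ x, Finv (fun ω : Fin m → ℝ => Real.exp ((∑ i, ω i ^ 2) / 2) • ht ω) x
          ∂(gaussianPi u 1)
        = Finv ht u :=
  stmt_15_general m ht hint
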